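/- arXiv:2002.08237 — 5 statements merged into one kernel-verified Lean document; each statement's English description precedes it below -/
import Mathlib

section
/- Let 0 < T⁻ ≤ 1 ≤ T⁺ with T⁺ - T⁻ = ln(T⁺/T⁻). Set φ = T⁺/T⁻, δ₋ = T⁻ - 1, δ₊ = T⁺ - 1, and for τ ≥ 0 define Z(τ) = φ^(exp(-τ)) · (1 + δ₋·exp(-τ)) / (1 + δ₊·exp(-τ)). Then Z(τ) ≥ 1 for all τ ≥ 0. -/
/-! With `s = exp (-τ) ∈ (0, 1]`, `a = T⁺ - 1` and `b = T⁻ - 1`, the constraint says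
`log φ = a - b`, so `log Z = s (a - b) - log (1 + a s) + log (1 + b s)`. This function of `s`
vanishes at `s = 0` and, by the constraint, at `s = 1`. Its derivative has the sign of
`a + b + a b s`, which is antitone in `s` because `a b ≤ 0`; so it first increases and then
decreases on `[0, 1]`, hence stays nonnegative there. -/

open Real Set

lemma nonneg_of_deriv_neg_imp_nonpos {f f' : ℝ → ℝ} {a b : ℝ}
    (hf : ∀ x ∈ Icc a b, HasDerivAt f (f' x) x)
    (hsign : ∀ x ∈ Icc a b, ∀ y ∈ Icc a b, x ≤ y → f' x < 0 → f' y ≤ 0)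
    (ha : 0 ≤ f a) (hb : 0 ≤ f b) : ∀ s ∈ Icc a b, 0 ≤ f s := by
  intro s hs
  have hcont : ContinuousOn f (Icc a b) := fun x hx => (hf x hx).continuousAt.continuousWithinAt
  have hderiv : ∀ x ∈ Ioo a b, HasDerivWithinAt f (f' x) (Ioo a b) x :=
    fun x hx => (hf x (Ioo_subset_Icc_self hx)).hasDerivWithinAt
  by_cases hneg : ∃ x ∈ Icc a s, f' x < 0
  · obtain ⟨x, hx, hx'⟩ := hneg
    have hxab : x ∈ Icc a b := ⟨hx.1, hx.2.trans hs.2⟩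
    have hanti : AntitoneOn f (Icc s b) := by
      refine antitoneOn_of_hasDerivWithinAt_nonpos (f' := f') (convex_Icc s b)
        (hcont.mono ?_) ?_ ?_
      · exact Icc_subset_Icc_left hs.1
      · rw [interior_Icc]
        exact fun y hy => (hderiv y ⟨hs.1.trans_lt hy.1, hy.2⟩).mono
          (Ioo_subset_Ioo_left hs.1)
      · rw [interior_Icc]
        exact fun y hy =>
          hsign x hxab y ⟨hs.1.trans hy.1.le, hy.2.le⟩ (hx.2.trans hy.1.le) hx'
    exact hb.trans (hanti ⟨le_rfl, hs.2⟩ ⟨hs.2, le_rfl⟩ hs.2)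
  · push Not at hneg
    have hmono : MonotoneOn f (Icc a s) := by
      refine monotoneOn_of_hasDerivWithinAt_nonneg (f' := f') (convex_Icc a s)
        (hcont.mono ?_) ?_ ?_
      · exact Icc_subset_Icc_right hs.2
      · rw [interior_Icc]
        exact fun y hy => (hderiv y ⟨hy.1, hy.2.trans_le hs.2⟩).mono
          (Ioo_subset_Ioo_right hs.2)
      · rw [interior_Icc]
        exact fun y hy => hneg y (Ioo_subset_Icc_self hy)
    exact ha.trans (hmono ⟨le_rfl, hs.1⟩ ⟨hs.1, le_rfl⟩ hs.1)

noncomputable def logGap (a b s : ℝ) : ℝ :=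
  s * (a - b) - log (1 + a * s) + log (1 + b * s)

@[simp]
lemma logGap_zero (a b : ℝ) : logGap a b 0 = 0 := by
  simp [logGap]

lemma hasDerivAt_logGap {a b s : ℝ} (ha : 0 < 1 + a * s) (hb : 0 < 1 + b * s) :
    HasDerivAt (logGap a b)
      (s * (a - b) * (a + b + a * b * s) / ((1 + a * s) * (1 + b * s))) s := by
  have hlin : ∀ c : ℝ, HasDerivAt (fun t => 1 + c * t) c s := fun c => by
    simpa using ((hasDerivAt_id s).const_mul c).const_add 1
  have h : HasDerivAt (logGap a b) (1 * (a - b) - a / (1 + a * s) + b / (1 + b * s)) s :=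
    (((hasDerivAt_id s).mul_const (a - b)).sub ((hlin a).log ha.ne')).add ((hlin b).log hb.ne')
  refine h.congr_deriv ?_
  field_simp
  ring

lemma logGap_nonneg {a b : ℝ} (ha : 0 ≤ a) (hb : -1 < b) (hb0 : b ≤ 0)
    (h1 : 0 ≤ logGap a b 1) {s : ℝ} (hs : s ∈ Icc (0 : ℝ) 1) : 0 ≤ logGap a b s := by
  have hpos : ∀ x ∈ Icc (0 : ℝ) 1, 0 < 1 + a * x ∧ 0 < 1 + b * x := fun x hx =>
    ⟨by nlinarith [hx.1], by nlinarith [hx.2]⟩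
  refine nonneg_of_deriv_neg_imp_nonpos (fun x hx => hasDerivAt_logGap (hpos x hx).1 (hpos x hx).2)
    ?_ (by simp) h1 s hs
  intro x hx y hy hxy hneg
  obtain ⟨hax, hbx⟩ := hpos x hx
  obtain ⟨hay, hby⟩ := hpos y hy
  have hab : a * b ≤ 0 := mul_nonpos_of_nonneg_of_nonpos ha hb0
  have hx_sign : a + b + a * b * x < 0 := by
    by_contra! h
    exact hneg.not_ge (by
      apply div_nonneg _ (mul_pos hax hbx).le
      exact mul_nonneg (mul_nonneg hx.1 (by linarith)) h)
  have hy_sign : a + b + a * b * y ≤ 0 := by nlinarith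
  apply div_nonpos_of_nonpos_of_nonneg _ (mul_pos hay hby).le
  exact mul_nonpos_of_nonneg_of_nonpos (mul_nonneg hy.1 (by linarith)) hy_sign

theorem Z_ge_one (Tm Tp : ℝ) (hTm : 0 < Tm) (hTm1 : Tm ≤ 1) (hTp1 : 1 ≤ Tp)
    (heq : Tp - Tm = Real.log (Tp / Tm)) :
    ∀ τ : ℝ, 0 ≤ τ →
      (Tp / Tm) ^ Real.exp (-τ) * (1 + (Tm - 1) * Real.exp (-τ)) /
        (1 + (Tp - 1) * Real.exp (-τ)) ≥ 1 := by
  intro τ hτ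
  set s := exp (-τ)
  have hs : s ∈ Icc (0 : ℝ) 1 := ⟨(exp_pos _).le, exp_le_one_iff.mpr (by linarith)⟩
  have hlogφ : log (Tp / Tm) = (Tp - 1) - (Tm - 1) := by linarith
  have hgap1 : logGap (Tp - 1) (Tm - 1) 1 = 0 := by
    rw [log_div (by linarith) hTm.ne'] at heq
    simp only [logGap]
    ring_nf
    linarith
  have hZ : (Tp / Tm) ^ s * (1 + (Tm - 1) * s) / (1 + (Tp - 1) * s)
      = exp (logGap (Tp - 1) (Tm - 1) s) := by
    have hb : 0 < 1 + (Tm - 1) * s := by nlinarith [hs.2]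
    have ha : 0 < 1 + (Tp - 1) * s := by nlinarith [hs.1]
    rw [logGap, exp_add, exp_sub, exp_log ha, exp_log hb, rpow_def_of_pos (by positivity),
      hlogφ]
    ring_nf
  rw [ge_iff_le, hZ, one_le_exp_iff]
  exact logGap_nonneg (by linarith) (by linarith) (by linarith) hgap1.ge hs
end

section
/- Let 0 < T⁻ ≤ 1 ≤ T⁺ with T⁺ - 1 - ln T⁺ = T⁻ - 1 - ln T⁻. For μ > 0, t ≥ 0 define Λ(T, t) = 1 + (T - 1)·exp(-2μt) and D(T, t) = Λ(T,t) - 1 - ln Λ(T,t). Then D(T⁺, t) ≥ D(T⁻, t) for all t ≥ 0. -/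
/-!
Write `s = exp (-2 μ t) ∈ (0, 1]`, `D(x) = x - 1 - log x` and `Λ(T) = 1 + (T - 1) s`. The function
`G(T) = D(Λ(T)) - s² D(T)` vanishes at `T = 1` and has derivative
`s² (T - 1)² (1 - s) / (Λ(T) T) ≥ 0`, so `G(T⁻) ≤ 0 ≤ G(T⁺)`. Hence `D(Λ(T⁻)) ≤ s² D(T⁻) = s² D(T⁺) ≤ D(Λ(T⁺))`.
-/

open Real Set

noncomputable section

def modeKL (x : ℝ) : ℝ := x - 1 - log x

/-- The relative temperature `Λ(T, t)`, with the decay factor `s = exp (-2 μ t)` in place of `t`. -/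
def quenchTemp (T s : ℝ) : ℝ := 1 + (T - 1) * s

lemma modeKL_one : modeKL 1 = 0 := by simp [modeKL]

lemma hasDerivAt_modeKL {x : ℝ} (hx : x ≠ 0) : HasDerivAt modeKL (1 - x⁻¹) x :=
  ((hasDerivAt_id x).sub_const 1).sub (hasDerivAt_log hx)

lemma quenchTemp_pos {T s : ℝ} (hT : 0 < T) (hs0 : 0 ≤ s) (hs1 : s ≤ 1) : 0 < quenchTemp T s := by
  unfold quenchTemp; nlinarith [mul_nonneg hT.le hs0]

lemma quenchTemp_one (s : ℝ) : quenchTemp 1 s = 1 := by simp [quenchTemp]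

lemma monotoneOn_modeKL_quenchTemp_sub {s : ℝ} (hs0 : 0 ≤ s) (hs1 : s ≤ 1) :
    MonotoneOn (fun T ↦ modeKL (quenchTemp T s) - s ^ 2 * modeKL T) (Ioi 0) := by
  have hderiv : ∀ T ∈ Ioi (0 : ℝ), HasDerivAt (fun T ↦ modeKL (quenchTemp T s) - s ^ 2 * modeKL T)
      ((1 - (quenchTemp T s)⁻¹) * s - s ^ 2 * (1 - T⁻¹)) T := fun T hT ↦ by
    have hΛ : HasDerivAt (quenchTemp · s) s T := by
      unfold quenchTemp
      simpa using (((hasDerivAt_id T).sub_const 1).mul_const s).const_add 1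
    exact ((hasDerivAt_modeKL (quenchTemp_pos hT hs0 hs1).ne').comp T hΛ).sub
      ((hasDerivAt_modeKL hT.ne').const_mul _)
  refine monotoneOn_of_hasDerivWithinAt_nonneg (convex_Ioi 0)
    (fun T hT ↦ (hderiv T hT).continuousAt.continuousWithinAt)
    (fun T hT ↦ (hderiv T (interior_subset hT)).hasDerivWithinAt) fun T hT ↦ ?_
  rw [interior_Ioi, mem_Ioi] at hT
  have hΛ := quenchTemp_pos hT hs0 hs1
  have hform : (1 - (quenchTemp T s)⁻¹) * s - s ^ 2 * (1 - T⁻¹) =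
      s ^ 2 * (T - 1) ^ 2 * (1 - s) / (quenchTemp T s * T) := by
    field_simp
    unfold quenchTemp
    ring
  rw [hform]
  have : 0 ≤ 1 - s := by linarith
  positivity

lemma sq_mul_modeKL_le_modeKL_quenchTemp {T s : ℝ} (hT : 1 ≤ T) (hs0 : 0 ≤ s) (hs1 : s ≤ 1) :
    s ^ 2 * modeKL T ≤ modeKL (quenchTemp T s) := by
  have := monotoneOn_modeKL_quenchTemp_sub hs0 hs1 (mem_Ioi.2 one_pos)
    (mem_Ioi.2 (one_pos.trans_le hT)) hT
  simpa only [quenchTemp_one, modeKL_one, mul_zero, sub_zero, sub_nonneg] using this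

lemma modeKL_quenchTemp_le_sq_mul_modeKL {T s : ℝ} (hT0 : 0 < T) (hT1 : T ≤ 1) (hs0 : 0 ≤ s)
    (hs1 : s ≤ 1) : modeKL (quenchTemp T s) ≤ s ^ 2 * modeKL T := by
  have := monotoneOn_modeKL_quenchTemp_sub hs0 hs1 hT0 (mem_Ioi.2 one_pos) hT1
  simpa only [quenchTemp_one, modeKL_one, mul_zero, sub_zero, sub_nonpos] using this

theorem perMode_uphill_faster (Tm Tp μ : ℝ) (hTm : 0 < Tm) (hTm1 : Tm ≤ 1)
    (hTp1 : 1 ≤ Tp) (hμ : 0 < μ)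
    (heq : Tp - 1 - Real.log Tp = Tm - 1 - Real.log Tm) :
    ∀ t : ℝ, 0 ≤ t →
      (1 + (Tp - 1) * Real.exp (-2 * μ * t)) - 1 -
          Real.log (1 + (Tp - 1) * Real.exp (-2 * μ * t)) ≥
        (1 + (Tm - 1) * Real.exp (-2 * μ * t)) - 1 -
          Real.log (1 + (Tm - 1) * Real.exp (-2 * μ * t)) := by
  intro t ht
  set s := exp (-2 * μ * t)
  have hs0 : 0 ≤ s := exp_nonneg _
  have hs1 : s ≤ 1 := exp_le_one_iff.mpr (by nlinarith)
  have hD : modeKL Tp = modeKL Tm := heq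
  show modeKL (quenchTemp Tm s) ≤ modeKL (quenchTemp Tp s)
  calc modeKL (quenchTemp Tm s) ≤ s ^ 2 * modeKL Tm :=
        modeKL_quenchTemp_le_sq_mul_modeKL hTm hTm1 hs0 hs1
    _ = s ^ 2 * modeKL Tp := by rw [hD]
    _ ≤ modeKL (quenchTemp Tp s) := sq_mul_modeKL_le_modeKL_quenchTemp hTp1 hs0 hs1
end
end

section
/- Let 0 < T⁻ ≤ 1 ≤ T⁺ with T⁺ - 1 - ln T⁺ = T⁻ - 1 - ln T⁻, let N ≥ 1, and let μ₁, …, μ_N be positive reals. Define D(T, t) = (3/2)·∑_{k=1}^N [Λ_k(T,t) - 1 - ln Λ_k(T,t)] with Λ_k(T,t) = 1 + (T-1)·exp(-2μ_k t). Then D(T⁺, t) ≥ D(T⁻, t) for all t ≥ 0, i.e., uphill relaxation of a reversible Ornstein-Uhlenbeck process is at least as fast as downhill relaxation at every time. -/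
/-!
With `a = T⁺ - 1 ≥ 0`, `c = T⁻ - 1 ≤ 0` and `s = exp (-2 μ t) ∈ [0, 1]`, the difference
`g s = D_k(T⁺, s) - D_k(T⁻, s)` of the contributions of one mode vanishes at `s = 0` and, by the
equal-divergence hypothesis, at `s = 1`. Its derivative factors as
`s (a - c) / (Λ⁺ Λ⁻) · (a + c + a c s)`, whose last factor is decreasing because `a c ≤ 0`; so `g`
rises and then falls on `[0, 1]` and is therefore nonnegative there.
-/

open Set

theorem nonneg_of_hasDerivAt_mul_antitoneOn {g w q : ℝ → ℝ} {x y : ℝ}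
    (hg : ∀ u ∈ Icc x y, HasDerivAt g (w u * q u) u) (hw : ∀ u ∈ Icc x y, 0 ≤ w u)
    (hq : AntitoneOn q (Icc x y)) (hx : 0 ≤ g x) (hy : 0 ≤ g y) :
    ∀ s ∈ Icc x y, 0 ≤ g s := by
  intro s hs
  have hderiv {a b : ℝ} (hab : Icc a b ⊆ Icc x y) (u : ℝ) (hu : u ∈ interior (Icc a b)) :
      HasDerivWithinAt g (w u * q u) (interior (Icc a b)) u :=
    (hg u (hab (interior_subset hu))).hasDerivWithinAt
  have hcont {a b : ℝ} (hab : Icc a b ⊆ Icc x y) : ContinuousOn g (Icc a b) :=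
    fun u hu => (hg u (hab hu)).continuousAt.continuousWithinAt
  rcases le_or_gt 0 (q s) with hqs | hqs
  · have hxs : Icc x s ⊆ Icc x y := Icc_subset_Icc le_rfl hs.2
    have hmono : MonotoneOn g (Icc x s) :=
      monotoneOn_of_hasDerivWithinAt_nonneg (convex_Icc x s) (hcont hxs) (hderiv hxs)
        fun u hu => by
          rw [interior_Icc] at hu
          have hu' : u ∈ Icc x y := ⟨hu.1.le, hu.2.le.trans hs.2⟩
          exact mul_nonneg (hw u hu') (hqs.trans (hq hu' hs hu.2.le))
    exact hx.trans (hmono (left_mem_Icc.2 hs.1) (right_mem_Icc.2 hs.1) hs.1)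
  · have hsy : Icc s y ⊆ Icc x y := Icc_subset_Icc hs.1 le_rfl
    have hanti : AntitoneOn g (Icc s y) :=
      antitoneOn_of_hasDerivWithinAt_nonpos (convex_Icc s y) (hcont hsy) (hderiv hsy)
        fun u hu => by
          rw [interior_Icc] at hu
          have hu' : u ∈ Icc x y := ⟨hs.1.trans hu.1.le, hu.2.le⟩
          exact mul_nonpos_of_nonneg_of_nonpos (hw u hu') ((hq hs hu' hu.1.le).trans hqs.le)
    exact hy.trans (hanti (left_mem_Icc.2 hs.2) (right_mem_Icc.2 hs.2) hs.2)

/-- The term `Λ - 1 - log Λ` of one mode, with `Λ = 1 + (T - 1) s` and `s = exp (-2 μ t)`. -/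
noncomputable def modeDivergence (T s : ℝ) : ℝ :=
  (1 + (T - 1) * s) - 1 - Real.log (1 + (T - 1) * s)

theorem hasDerivAt_modeDivergence {T s : ℝ} (h : 1 + (T - 1) * s ≠ 0) :
    HasDerivAt (modeDivergence T) ((T - 1) ^ 2 * s / (1 + (T - 1) * s)) s := by
  have hΛ : HasDerivAt (fun s => 1 + (T - 1) * s) (T - 1) s := by
    simpa using ((hasDerivAt_id s).const_mul (T - 1)).const_add 1
  refine ((hΛ.sub_const 1).sub (hΛ.log h)).congr_deriv ?_
  field_simp
  ring

theorem one_add_sub_one_mul_pos {T s : ℝ} (hT : 0 < T) (hs : s ∈ Icc (0 : ℝ) 1) :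
    0 < 1 + (T - 1) * s := by
  rcases le_total T 1 with hT1 | hT1
  · nlinarith [mul_nonneg (sub_nonneg.2 hT1) (sub_nonneg.2 hs.2), hs.1]
  · nlinarith [hs.1, hs.2]

theorem sq_mul_div_sub_sq_mul_div {a c u : ℝ} (ha : 1 + a * u ≠ 0) (hc : 1 + c * u ≠ 0) :
    a ^ 2 * u / (1 + a * u) - c ^ 2 * u / (1 + c * u) =
      u * (a - c) / ((1 + a * u) * (1 + c * u)) * (a + c + a * c * u) := by
  rw [div_sub_div _ _ ha hc, div_mul_eq_mul_div]
  ring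

theorem modeDivergence_le_of_eq {Tm Tp : ℝ} (hTm : 0 < Tm) (hTm1 : Tm ≤ 1) (hTp1 : 1 ≤ Tp)
    (heq : Tp - 1 - Real.log Tp = Tm - 1 - Real.log Tm) {s : ℝ} (hs : s ∈ Icc (0 : ℝ) 1) :
    modeDivergence Tm s ≤ modeDivergence Tp s := by
  have hΛp (u) (hu : u ∈ Icc (0 : ℝ) 1) := one_add_sub_one_mul_pos (by linarith : 0 < Tp) hu
  have hΛm (u) (hu : u ∈ Icc (0 : ℝ) 1) := one_add_sub_one_mul_pos hTm hu
  have key := nonneg_of_hasDerivAt_mul_antitoneOn (g := modeDivergence Tp - modeDivergence Tm)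
    (w := fun u => u * ((Tp - 1) - (Tm - 1)) / ((1 + (Tp - 1) * u) * (1 + (Tm - 1) * u)))
    (q := fun u => (Tp - 1) + (Tm - 1) + (Tp - 1) * (Tm - 1) * u)
    (fun u hu => ((hasDerivAt_modeDivergence (hΛp u hu).ne').sub
      (hasDerivAt_modeDivergence (hΛm u hu).ne')).congr_deriv
      (sq_mul_div_sub_sq_mul_div (hΛp u hu).ne' (hΛm u hu).ne'))
    (fun u hu => div_nonneg (mul_nonneg hu.1 (by linarith)) (mul_pos (hΛp u hu) (hΛm u hu)).le)
    (fun u _ v _ huv => by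
      have hac : (Tp - 1) * (Tm - 1) ≤ 0 :=
        mul_nonpos_of_nonneg_of_nonpos (by linarith) (by linarith)
      nlinarith)
    (by simp [modeDivergence]) (by simp [modeDivergence]; linarith) s hs
  simpa using key

theorem OU_uphill_faster_general (Tm Tp : ℝ) (hTm : 0 < Tm) (hTm1 : Tm ≤ 1) (hTp1 : 1 ≤ Tp)
    (heq : Tp - 1 - Real.log Tp = Tm - 1 - Real.log Tm)
    (N : ℕ) (μ : Fin N → ℝ) (hμ : ∀ k, 0 < μ k) :
    ∀ t : ℝ, 0 ≤ t →
      (3 / 2 : ℝ) * ∑ k, ((1 + (Tp - 1) * Real.exp (-2 * μ k * t)) - 1 -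
          Real.log (1 + (Tp - 1) * Real.exp (-2 * μ k * t))) ≥
      (3 / 2 : ℝ) * ∑ k, ((1 + (Tm - 1) * Real.exp (-2 * μ k * t)) - 1 -
          Real.log (1 + (Tm - 1) * Real.exp (-2 * μ k * t))) := by
  intro t ht
  refine mul_le_mul_of_nonneg_left (Finset.sum_le_sum fun k _ => ?_) (by norm_num)
  have hdecay : Real.exp (-2 * μ k * t) ∈ Icc (0 : ℝ) 1 :=
    ⟨(Real.exp_pos _).le, Real.exp_le_one_iff.2 (by nlinarith [hμ k])⟩
  exact modeDivergence_le_of_eq hTm hTm1 hTp1 heq hdecay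

theorem OU_uphill_faster (Tm Tp : ℝ) (hTm : 0 < Tm) (hTm1 : Tm ≤ 1) (hTp1 : 1 ≤ Tp)
    (heq : Tp - 1 - Real.log Tp = Tm - 1 - Real.log Tm)
    (N : ℕ) (hN : 1 ≤ N) (μ : Fin N → ℝ) (hμ : ∀ k, 0 < μ k) :
    ∀ t : ℝ, 0 ≤ t →
      (3 / 2 : ℝ) * ∑ k, ((1 + (Tp - 1) * Real.exp (-2 * μ k * t)) - 1 -
          Real.log (1 + (Tp - 1) * Real.exp (-2 * μ k * t))) ≥
      (3 / 2 : ℝ) * ∑ k, ((1 + (Tm - 1) * Real.exp (-2 * μ k * t)) - 1 -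
          Real.log (1 + (Tm - 1) * Real.exp (-2 * μ k * t))) :=
  OU_uphill_faster_general Tm Tp hTm hTm1 hTp1 heq N μ hμ
end

section
/- Let T⁻ ∈ (0, 1]. Then T⁺ := -W₋₁(-T⁻·e^{-T⁻}) (the secondary real branch of the Lambert W function) satisfies the sharp two-sided bound (2/3)·[1 + √(2h) + h] ≤ T⁺ ≤ 1 + √(2h) + h, where h = T⁻ - 1 - ln T⁻. -/
theorem equidistant_Tplus_two_sided_bound (Tm Tp : ℝ) (hTm : 0 < Tm) (hTm1 : Tm ≤ 1)
    (hTp : 1 ≤ Tp)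
    (heq : Tp - 1 - Real.log Tp = Tm - 1 - Real.log Tm) :
    (2 / 3 : ℝ) * (1 + Real.sqrt (2 * (Tm - 1 - Real.log Tm)) + (Tm - 1 - Real.log Tm)) ≤ Tp ∧
    Tp ≤ 1 + Real.sqrt (2 * (Tm - 1 - Real.log Tm)) + (Tm - 1 - Real.log Tm) := by
  rw [← heq]
  have hTp0 : (0 : ℝ) < Tp := lt_of_lt_of_le one_pos hTp
  set L := Real.log Tp with hLdef
  have hL0 : 0 ≤ L := Real.log_nonneg hTp
  have hh : 0 ≤ Tp - 1 - L := by
    have := Real.log_le_sub_one_of_pos hTp0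
    linarith
  -- log lower bound: Tp - 1 ≤ Tp * L
  have hlow : Tp - 1 ≤ Tp * L := by
    have h1 : 1 - Tp⁻¹ ≤ L := Real.one_sub_inv_le_log_of_pos hTp0
    have h2 : Tp * (1 - Tp⁻¹) ≤ Tp * L := by
      exact mul_le_mul_of_nonneg_left h1 hTp0.le
    have h3 : Tp * (1 - Tp⁻¹) = Tp - 1 := by
      field_simp
    linarith
  -- exp quadratic bound gives L ^ 2 ≤ 2 * (Tp - 1 - L)
  have hquad : L ^ 2 ≤ 2 * (Tp - 1 - L) := by
    have := Real.quadratic_le_exp_of_nonneg hL0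
    rw [Real.exp_log hTp0] at this
    linarith
  constructor
  · -- lower bound
    have key : 2 * (Tp - 1 - L) ≤ ((Tp + 2 * L) / 2) ^ 2 := by
      nlinarith [sq_nonneg (Tp - 2), mul_nonneg hL0 hL0, sq_nonneg L]
    have hs : Real.sqrt (2 * (Tp - 1 - L)) ≤ (Tp + 2 * L) / 2 := by
      have h4 : (0 : ℝ) ≤ (Tp + 2 * L) / 2 := by linarith
      calc Real.sqrt (2 * (Tp - 1 - L)) ≤ Real.sqrt (((Tp + 2 * L) / 2) ^ 2) :=
            Real.sqrt_le_sqrt key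
        _ = (Tp + 2 * L) / 2 := Real.sqrt_sq h4
    linarith
  · -- upper bound
    have hs : L ≤ Real.sqrt (2 * (Tp - 1 - L)) := by
      rw [Real.le_sqrt hL0]
      · exact hquad
      · linarith
    linarith
end

section
/- If T⁺ ≥ 1 satisfies T⁺ - 1 - ln T⁺ = h for some h ≥ 0, then T⁺ ≤ 1 + √(2h) + h. -/
/-!
Write `Tp = 1 + t + t²/2` with `t = √(2 Tp - 1) - 1 ≥ 0`. Since `1 + t + t²/2 ≤ exp t`, we get
`log Tp ≤ t`, hence `h = Tp - 1 - log Tp ≥ t²/2`, i.e. `t ≤ √(2h)`, and so `Tp ≤ 1 + √(2h) + h`.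
-/

open Real

lemma Real.log_quadratic_le {t : ℝ} (ht : 0 ≤ t) : log (1 + t + t ^ 2 / 2) ≤ t :=
  (log_le_iff_le_exp (by positivity)).2 (quadratic_le_exp_of_nonneg ht)

lemma Real.quadratic_le_one_add_sqrt_add {t h : ℝ} (hth : t ^ 2 / 2 ≤ h) :
    1 + t + t ^ 2 / 2 ≤ 1 + √(2 * h) + h := by
  have : t ≤ √(2 * h) := Real.le_sqrt_of_sq_le (by linarith)
  linarith

theorem equidistant_Tplus_upper_bound_general (Tp h : ℝ) (hTp : 1 ≤ Tp)
    (heq : Tp - 1 - Real.log Tp = h) :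
    Tp ≤ 1 + Real.sqrt (2 * h) + h := by
  set t := √(2 * Tp - 1) - 1
  have ht : 0 ≤ t := by
    have : 1 ≤ √(2 * Tp - 1) := Real.one_le_sqrt.2 (by linarith)
    linarith
  have hTp_eq : Tp = 1 + t + t ^ 2 / 2 := by
    have := Real.sq_sqrt (show 0 ≤ 2 * Tp - 1 by linarith)
    linear_combination -this / 2
  have hlog : Real.log Tp ≤ t := hTp_eq ▸ Real.log_quadratic_le ht
  rw [hTp_eq]
  exact Real.quadratic_le_one_add_sqrt_add (by linarith)

theorem equidistant_Tplus_upper_bound (Tp h : ℝ) (hTp : 1 ≤ Tp) (hh : 0 ≤ h)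
    (heq : Tp - 1 - Real.log Tp = h) :
    Tp ≤ 1 + Real.sqrt (2 * h) + h :=
  equidistant_Tplus_upper_bound_general Tp h hTp heq
end
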